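/- arXiv:2512.24920 — 4 statements merged into one kernel-verified Lean document; each statement's English description precedes it below -/
import Mathlib

section
/- Let R be a ring, a, b, w ∈ R with w central, and define 𝔸(x, y) = (a·x + w·y, b·x − a·y) on R × R. Set F = a² + w·b and C = b·a − a·b. Then for every k ≥ 1, the iterate 𝔸^{2k} satisfies 𝔸^{2k}(x, y) = (F^k·x, F^k·y + (∑_{i=0}^{k-1} F^i·C·F^{k-1-i})·x) for all x, y ∈ R. -/
/-!
Two steps of `primA a b w` act on `(x, y)` as left multiplication by the lower triangular matrix
`[[F, 0], [C, F]]` with `F = a² + w b`, `C = b a - a b`; the centrality of `w` is what makes the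
off-diagonal `w`-terms cancel. The `k`-th power of that matrix has diagonal `F^k` and lower entry
`∑ F^i C F^(k-1-i)`, by peeling off one factor at a time.
-/

/-- The primitive superconnection map `𝔸(x, y) = (a·x + w·y, b·x − a·y)`. -/
def primA {R : Type*} [Ring R] (a b w : R) : R × R → R × R :=
  fun p => (a * p.1 + w * p.2, b * p.1 - a * p.2)

open Finset

def lowerTriMul {R : Type*} [Semiring R] (F C : R) : R × R → R × R :=
  fun p => (F * p.1, F * p.2 + C * p.1)

theorem sum_range_succ_pow_mul_mul_pow {R : Type*} [Semiring R] (F C : R) (k : ℕ) :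
    ∑ i ∈ range (k + 1), F ^ i * C * F ^ (k + 1 - 1 - i) =
      F * ∑ i ∈ range k, F ^ i * C * F ^ (k - 1 - i) + C * F ^ k := by
  rw [sum_range_succ', mul_sum]
  congr 1
  · refine sum_congr rfl fun i _ => ?_
    rw [show k + 1 - 1 - (i + 1) = k - 1 - i by omega, pow_succ', mul_assoc, mul_assoc, mul_assoc]
  · simp

theorem lowerTriMul_iterate {R : Type*} [Semiring R] (F C : R) (k : ℕ) (x y : R) :
    (lowerTriMul F C)^[k] (x, y) =
      (F ^ k * x, F ^ k * y + (∑ i ∈ range k, F ^ i * C * F ^ (k - 1 - i)) * x) := by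
  induction k with
  | zero => simp
  | succ k ih =>
    rw [Function.iterate_succ_apply', ih, sum_range_succ_pow_mul_mul_pow]
    simp only [lowerTriMul, pow_succ', mul_assoc, mul_add, add_mul, add_assoc]

theorem primA_iterate_two {R : Type*} [Ring R] (a b w : R) (hw : ∀ r : R, w * r = r * w) :
    (primA a b w)^[2] = lowerTriMul (a ^ 2 + w * b) (b * a - a * b) := by
  have hw' : ∀ r s : R, r * (w * s) = w * (r * s) := fun r s => by
    rw [← mul_assoc, ← hw, mul_assoc]
  funext ⟨x, y⟩
  simp only [Function.iterate_succ, Function.iterate_zero, Function.comp_apply, id_eq, primA,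
    lowerTriMul, mul_add, mul_sub]
  rw [hw' a y, hw' b y]
  ext <;> noncomm_ring

theorem primA_pow_two_mul {R : Type*} [Ring R] (a b w : R)
    (hw : ∀ r : R, w * r = r * w) :
    ∀ k : ℕ, 1 ≤ k → ∀ x y : R,
      (primA a b w)^[2 * k] (x, y) =
        ((a ^ 2 + w * b) ^ k * x,
         (a ^ 2 + w * b) ^ k * y +
           (∑ i ∈ Finset.range k,
             (a ^ 2 + w * b) ^ i * (b * a - a * b) * (a ^ 2 + w * b) ^ (k - 1 - i)) * x) := by
  intro k _ x y
  rw [Function.iterate_mul, primA_iterate_two a b w hw, lowerTriMul_iterate]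
end

section
/- Let R be a ring, a, b, w ∈ R with w central. Set F = a² + w·b and C = b·a − a·b. Then for every k ≥ 1: a·F^k − F^k·a + w·(∑_{i=0}^{k-1} F^i·C·F^{k-1-i}) = 0. -/
/-!
The map `x ↦ a * x - x * a` is a derivation, so its value on `F ^ k` is the noncommutative
Leibniz sum `∑ F ^ i * (a * F - F * a) * F ^ (k - 1 - i)`. For `F = a ^ 2 + w * b` with `w`
commuting with `a`, the square `a ^ 2` drops out of `a * F - F * a`, leaving `-(w * C)`; since
`w` is central it can be pulled out of every term of the Leibniz sum.
-/

open Finset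

theorem mul_pow_sub_pow_mul {R : Type*} [Ring R] (a x : R) (k : ℕ) :
    a * x ^ k - x ^ k * a = ∑ i ∈ range k, x ^ i * (a * x - x * a) * x ^ (k - 1 - i) := by
  induction k with
  | zero => simp
  | succ k ih =>
    have hshift : ∑ i ∈ range k, x ^ (i + 1) * (a * x - x * a) * x ^ (k + 1 - 1 - (i + 1)) =
        x * ∑ i ∈ range k, x ^ i * (a * x - x * a) * x ^ (k - 1 - i) := by
      rw [mul_sum]
      refine sum_congr rfl fun i _ => ?_
      rw [show k + 1 - 1 - (i + 1) = k - 1 - i by omega, pow_succ', mul_assoc, mul_assoc,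
        mul_assoc]
    rw [sum_range_succ', hshift, ← ih]
    simp only [pow_zero, one_mul, Nat.add_sub_cancel, Nat.sub_zero, pow_succ']
    noncomm_ring

theorem Commute.mul_sq_add_mul_sub_sq_add_mul_mul {R : Type*} [Ring R] {a w : R} (b : R)
    (hw : Commute w a) :
    a * (a ^ 2 + w * b) - (a ^ 2 + w * b) * a = -(w * (b * a - a * b)) := by
  have hab : a * (w * b) = w * (a * b) := hw.symm.left_comm b
  rw [mul_add, add_mul, hab, pow_two]
  noncomm_ring

theorem primitive_bianchi_first {R : Type*} [Ring R] (a b w : R)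
    (hw : ∀ r : R, w * r = r * w) :
    ∀ k : ℕ, 1 ≤ k →
      a * (a ^ 2 + w * b) ^ k - (a ^ 2 + w * b) ^ k * a +
        w * (∑ i ∈ Finset.range k,
          (a ^ 2 + w * b) ^ i * (b * a - a * b) * (a ^ 2 + w * b) ^ (k - 1 - i)) = 0 := by
  intro k _
  set F := a ^ 2 + w * b
  rw [mul_pow_sub_pow_mul, Commute.mul_sq_add_mul_sub_sq_add_mul_mul b (hw a), mul_sum,
    ← sum_add_distrib]
  refine sum_eq_zero fun i _ => ?_
  rw [← mul_assoc w, ← mul_assoc w, hw (F ^ i)]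
  simp only [mul_neg, neg_mul, mul_assoc, neg_add_cancel]
end

section
/- Let R be a ring, a, b, w ∈ R with w central. Set F = a² + w·b and C = b·a − a·b, and let S_k = ∑_{i=0}^{k-1} F^i·C·F^{k-1-i}. Then for every k ≥ 1: b·F^k − F^k·b − a·S_k − S_k·a = 0. -/
/-!
`S_k(C)` is the derivative of `X ↦ X ^ k` at `F` in the direction `C`, so commutators with a
power obey the Leibniz rule `x * F ^ k - F ^ k * x = S_k(x * F - F * x)`. Since
`a * F - F * a = -(w * C)` and `b * F - F * b = a * C + C * a`, the identity becomes
`S_k(a * C + C * a) = a * S_k + S_k * a`, which follows by induction on `k` once the Leibniz rule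
for `a`, i.e. `a * F ^ k = F ^ k * a - w * S_k`, is used to move `a` past `F ^ k`.
-/

open Finset

section

variable {R : Type*} [Ring R]

def powDeriv (F C : R) (k : ℕ) : R :=
  ∑ i ∈ range k, F ^ i * C * F ^ (k - 1 - i)

variable (F C : R)

@[simp]
theorem powDeriv_zero : powDeriv F C 0 = 0 := sum_range_zero _

theorem powDeriv_succ (k : ℕ) : powDeriv F C (k + 1) = powDeriv F C k * F + F ^ k * C := by
  rw [powDeriv, sum_range_succ, Nat.add_sub_cancel, Nat.sub_self, pow_zero, mul_one, powDeriv,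
    sum_mul]
  congr 1
  refine sum_congr rfl fun i hi => ?_
  rw [mul_assoc _ _ F, ← pow_succ]
  congr 2
  have := mem_range.mp hi
  omega

theorem powDeriv_neg (k : ℕ) : powDeriv F (-C) k = -powDeriv F C k := by
  simp only [powDeriv, mul_neg, neg_mul, sum_neg_distrib]

theorem powDeriv_mul_left_of_commute {w : R} (hwF : Commute w F) (k : ℕ) :
    powDeriv F (w * C) k = w * powDeriv F C k := by
  simp only [powDeriv, mul_sum, ← mul_assoc, (hwF.pow_right _).eq]

theorem commute_powDeriv {w : R} (hwF : Commute w F) (hwC : Commute w C) (k : ℕ) :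
    Commute w (powDeriv F C k) :=
  .sum_right _ _ _ fun i _ => ((hwF.pow_right i).mul_right hwC).mul_right (hwF.pow_right _)

theorem mul_pow_sub_pow_mul_s4 (x : R) (k : ℕ) :
    x * F ^ k - F ^ k * x = powDeriv F (x * F - F * x) k := by
  induction k with
  | zero => simp
  | succ k ih =>
    rw [powDeriv_succ, ← ih, pow_succ]
    noncomm_ring

theorem powDeriv_mul_add_mul {a w : R} (haF : a * F - F * a = -(w * C)) (hwF : Commute w F)
    (hwC : Commute w C) (k : ℕ) :
    powDeriv F (a * C + C * a) k = a * powDeriv F C k + powDeriv F C k * a := by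
  induction k with
  | zero => simp
  | succ k ih =>
    set S := powDeriv F C k
    have haFk : a * F ^ k = -(w * S) + F ^ k * a := by
      have := mul_pow_sub_pow_mul_s4 F a k
      rw [haF, powDeriv_neg, powDeriv_mul_left_of_commute _ _ hwF] at this
      exact sub_eq_iff_eq_add.mp this
    have hFa : F * a = a * F + w * C := by
      rw [← sub_eq_iff_eq_add', ← neg_sub, haF, neg_neg]
    have hSw : S * w = w * S := (commute_powDeriv F C hwF hwC k).eq.symm
    rw [powDeriv_succ, ih, powDeriv_succ]
    calc (a * S + S * a) * F + F ^ k * (a * C + C * a)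
        = a * S * F + S * a * F + F ^ k * a * C + F ^ k * C * a + (S * w - w * S) * C := by
          rw [hSw, sub_self, zero_mul, add_zero]
          noncomm_ring
      _ = a * (S * F + F ^ k * C) + (S * F + F ^ k * C) * a := by
          rw [mul_add a, ← mul_assoc a (F ^ k), haFk, add_mul (S * F), mul_assoc S F a, hFa]
          noncomm_ring

end

theorem primitive_bianchi_second {R : Type*} [Ring R] (a b w : R)
    (hw : ∀ r : R, w * r = r * w) :
    ∀ k : ℕ, 1 ≤ k →
      b * (a ^ 2 + w * b) ^ k - (a ^ 2 + w * b) ^ k * b -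
        a * (∑ i ∈ Finset.range k,
          (a ^ 2 + w * b) ^ i * (b * a - a * b) * (a ^ 2 + w * b) ^ (k - 1 - i)) -
        (∑ i ∈ Finset.range k,
          (a ^ 2 + w * b) ^ i * (b * a - a * b) * (a ^ 2 + w * b) ^ (k - 1 - i)) * a = 0 := by
  intro k _
  set F := a ^ 2 + w * b
  set C := b * a - a * b
  have hw' : ∀ r, Commute w r := hw
  have haF : a * F - F * a = -(w * C) := by
    have e : a * (w * b) = w * (a * b) := ((hw' a).left_comm b).symm
    simp only [F, C, mul_add, add_mul, e]
    noncomm_ring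
  have hbF : b * F - F * b = a * C + C * a := by
    have e : b * (w * b) = w * b * b := by rw [← mul_assoc, ← hw b]
    simp only [F, C, mul_add, add_mul, e]
    noncomm_ring
  change b * F ^ k - F ^ k * b - a * powDeriv F C k - powDeriv F C k * a = 0
  rw [mul_pow_sub_pow_mul_s4, hbF, powDeriv_mul_add_mul F C haF (hw' F) (hw' C)]
  abel
end

section
/- Let M be a smooth manifold with closed 2-form ω, and define ∂(α, β) = (dα + ω ∧ β, −dβ) on Ω(M) ⊕ Ω(M). Equip Ω(M) ⊕ Ω(M) with the product (α₁, β₁)·(α₂, β₂) = (α₁ ∧ α₂, β₁ ∧ α₂ + (−1)^{|α₁|} α₁ ∧ β₂). Then ∂ is a graded derivation: for homogeneous (α₁, β₁) of total degree p (i.e., α₁ ∈ Ω^p(M), β₁ ∈ Ω^{p−1}(M)), ∂((α₁,β₁)·(α₂,β₂)) = ∂(α₁,β₁)·(α₂,β₂) + (−1)^p (α₁,β₁)·∂(α₂,β₂). -/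
/-!
The boundary splits as `∂ = D + T` with `D (α, β) = (dα, −dβ)` and `T (α, β) = (ω ∧ β, 0)`.
Each summand is a graded derivation of the cone product on its own: for `D` this is the Leibniz
rule of `d` together with `d ∘ ε = −ε ∘ d`, for `T` it is the centrality and evenness of `ω`.
Since the product is biadditive, the derivation identity is additive in the operator.
-/

/-- The product on the cone complex `Ω(M) ⊕ Ω(M)`, with `ε` the parity involution
acting by `(−1)^{|α|}` on homogeneous `α`. -/
def coneMul {A : Type*} [Ring A] (ε : A →+* A) : A × A → A × A → A × A :=
  fun p q => (p.1 * q.1, p.2 * q.1 + ε p.1 * q.2)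

/-- The primitive boundary map `∂(α, β) = (dα + ω ∧ β, −dβ)`. -/
def coneD {A : Type*} [Ring A] (d : A →+ A) (w : A) : A × A → A × A :=
  fun q => (d q.1 + w * q.2, -(d q.2))

section ConeDerivation

variable {A : Type*} [Ring A] (ε : A →+* A)

theorem coneMul_add_left (x y q : A × A) :
    coneMul ε (x + y) q = coneMul ε x q + coneMul ε y q := by
  simp only [coneMul, Prod.fst_add, Prod.snd_add, map_add, add_mul, Prod.mk_add_mk]
  congr 1
  abel

theorem coneMul_add_right (x q r : A × A) :
    coneMul ε x (q + r) = coneMul ε x q + coneMul ε x r := by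
  simp only [coneMul, Prod.fst_add, Prod.snd_add, mul_add, Prod.mk_add_mk]
  congr 1
  abel

def IsConeDerivationAt (D : A × A → A × A) (p : ℕ) (α₁ β₁ : A) : Prop :=
  ∀ α₂ β₂ : A,
    D (coneMul ε (α₁, β₁) (α₂, β₂)) =
      coneMul ε (D (α₁, β₁)) (α₂, β₂) + ((-1 : ℤ) ^ p) • coneMul ε (α₁, β₁) (D (α₂, β₂))

variable {ε}

theorem IsConeDerivationAt.add {D D' : A × A → A × A} {p : ℕ} {α₁ β₁ : A}
    (hD : IsConeDerivationAt ε D p α₁ β₁) (hD' : IsConeDerivationAt ε D' p α₁ β₁) :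
    IsConeDerivationAt ε (D + D') p α₁ β₁ := by
  intro α₂ β₂
  rw [Pi.add_apply, Pi.add_apply, Pi.add_apply, hD α₂ β₂, hD' α₂ β₂, coneMul_add_left,
    coneMul_add_right, smul_add]
  abel

def coneDiag (d : A →+ A) : A × A → A × A :=
  fun q => (d q.1, -(d q.2))

def coneTwist (w : A) : A × A → A × A :=
  fun q => (w * q.2, 0)

theorem coneD_eq_coneDiag_add_coneTwist (d : A →+ A) (w : A) :
    coneD d w = coneDiag d + coneTwist w := by
  funext q
  exact Prod.ext rfl (add_zero _).symm

theorem neg_one_pow_smul_neg_one_pow_smul (p : ℕ) (x : A) :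
    ((-1 : ℤ) ^ p) • ((-1 : ℤ) ^ p) • x = x := by
  rw [smul_smul, ← mul_pow, neg_one_mul, neg_neg, one_pow, one_smul]

variable {p : ℕ} {α₁ β₁ : A}

theorem isConeDerivationAt_coneDiag {d : A →+ A}
    (hLeib : ∀ x y : A, d (x * y) = d x * y + ε x * d y)
    (hεd : ∀ x : A, ε (d x) = -(d (ε x)))
    (hα : ε α₁ = ((-1 : ℤ) ^ p) • α₁) (hβ : ε β₁ = -(((-1 : ℤ) ^ p) • β₁)) :
    IsConeDerivationAt ε (coneDiag d) p α₁ β₁ := by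
  intro α₂ β₂
  have hsεα : ((-1 : ℤ) ^ p) • ε α₁ = α₁ := by rw [hα, neg_one_pow_smul_neg_one_pow_smul]
  have hεεα : ε (ε α₁) = α₁ := by rw [hα, map_zsmul, hsεα]
  refine Prod.ext ?_ ?_
  · show d (α₁ * α₂) = d α₁ * α₂ + ((-1 : ℤ) ^ p) • (α₁ * d α₂)
    rw [hLeib, hα, smul_mul_assoc]
  · show -(d (β₁ * α₂ + ε α₁ * β₂)) =
      -(d β₁) * α₂ + ε (d α₁) * β₂ + ((-1 : ℤ) ^ p) • (β₁ * d α₂ + ε α₁ * -(d β₂))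
    rw [map_add, hLeib, hLeib, hεεα, hεd, hβ, smul_add, mul_neg, smul_neg, ← smul_mul_assoc,
      ← smul_mul_assoc, hsεα, neg_mul, neg_mul, neg_mul]
    abel

theorem isConeDerivationAt_coneTwist {w : A} (hwα : Commute w α₁) (hwβ : Commute w β₁)
    (hεw : ε w = w)
    (hα : ε α₁ = ((-1 : ℤ) ^ p) • α₁) (hβ : ε β₁ = -(((-1 : ℤ) ^ p) • β₁)) :
    IsConeDerivationAt ε (coneTwist w) p α₁ β₁ := by
  intro α₂ β₂
  refine Prod.ext ?_ ?_
  · show w * (β₁ * α₂ + ε α₁ * β₂) = w * β₁ * α₂ + ((-1 : ℤ) ^ p) • (α₁ * (w * β₂))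
    rw [hα, mul_add, ← mul_assoc, ← mul_assoc, mul_smul_comm, hwα.eq, smul_mul_assoc,
      mul_assoc α₁]
  · show (0 : A) = 0 * α₂ + ε (w * β₁) * β₂ + ((-1 : ℤ) ^ p) • (β₁ * (w * β₂) + ε α₁ * 0)
    rw [zero_mul, zero_add, map_mul, hεw, hβ, mul_zero, add_zero, mul_neg, neg_mul, mul_smul_comm,
      hwβ.eq, smul_mul_assoc, mul_assoc, neg_add_cancel]

end ConeDerivation

theorem coneD_derivation_general {A : Type*} [Ring A] (ε : A →+* A) (d : A →+ A) (w : A)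
    (hLeib : ∀ x y : A, d (x * y) = d x * y + ε x * d y)
    (hεd : ∀ x : A, ε (d x) = -(d (ε x)))
    (hw : ∀ x : A, w * x = x * w)
    (hεw : ε w = w)
    (p : ℕ) (α₁ β₁ : A)
    (hα : ε α₁ = ((-1 : ℤ) ^ p) • α₁)
    (hβ : ε β₁ = -(((-1 : ℤ) ^ p) • β₁)) :
    ∀ α₂ β₂ : A,
      coneD d w (coneMul ε (α₁, β₁) (α₂, β₂)) =
        coneMul ε (coneD d w (α₁, β₁)) (α₂, β₂) +
          ((-1 : ℤ) ^ p) • coneMul ε (α₁, β₁) (coneD d w (α₂, β₂)) := by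
  rw [coneD_eq_coneDiag_add_coneTwist]
  exact (isConeDerivationAt_coneDiag hLeib hεd hα hβ).add
    (isConeDerivationAt_coneTwist (hw α₁) (hw β₁) hεw hα hβ)

theorem coneD_derivation {A : Type*} [Ring A] (ε : A →+* A) (d : A →+ A) (w : A)
    (hLeib : ∀ x y : A, d (x * y) = d x * y + ε x * d y)
    (hεd : ∀ x : A, ε (d x) = -(d (ε x)))
    (hw : ∀ x : A, w * x = x * w)
    (hεw : ε w = w)
    (hdw : d w = 0)
    (p : ℕ) (α₁ β₁ : A)
    (hα : ε α₁ = ((-1 : ℤ) ^ p) • α₁)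
    (hβ : ε β₁ = -(((-1 : ℤ) ^ p) • β₁)) :
    ∀ α₂ β₂ : A,
      coneD d w (coneMul ε (α₁, β₁) (α₂, β₂)) =
        coneMul ε (coneD d w (α₁, β₁)) (α₂, β₂) +
          ((-1 : ℤ) ^ p) • coneMul ε (α₁, β₁) (coneD d w (α₂, β₂)) :=
  coneD_derivation_general ε d w hLeib hεd hw hεw p α₁ β₁ hα hβ
end
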